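/- Let G be an ordered graph, let xy ∈ E(G) with v(xy,G) = x, and let i be a positive integer with i < h(xy,G). Define S_i(x,y) to be the set of vertices z such that v(yz,G) = y and h(xy,G) − i ≤ h(yz,G) < h(xy,G). Then |S_i(x,y)| = i, the set S_i(x,y) contains neither x nor y, and for every z ∈ S_i(x,y) the path xyz is increasing (i.e., xy < yz in the edge order). -/

import Mathlib

open scoped Classical

namespace EO

/-- Auxiliary choice function for building the height table: given the list `prev` of the
(optional) entries at all earlier scanning positions, `htPick N G w k prev` is the entry at
scanning position `k`, namely the `w`-largest edge of `G` containing the column vertex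
`⟨k % N⟩` of position `k` that does not occur among the earlier entries, if any exists. -/
noncomputable def htPick (N : ℕ) (G : SimpleGraph (Fin N)) (w : Sym2 (Fin N) → ℕ)
    (k : ℕ) (prev : List (Option (Sym2 (Fin N)))) : Option (Sym2 (Fin N)) :=
  if hN : 0 < N then
    if h : ∃ e, (e ∈ G.edgeSet ∧ (⟨k % N, Nat.mod_lt k hN⟩ : Fin N) ∈ e ∧
          some e ∉ prev) ∧
        ∀ f, (f ∈ G.edgeSet ∧ (⟨k % N, Nat.mod_lt k hN⟩ : Fin N) ∈ f ∧
          some f ∉ prev) → w f ≤ w e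
    then some h.choose else none
  else none

/-- The list of the first `k` entries of the height table of the ordered graph `G`
(vertex set `Fin N` with its natural vertex order, edge order given by the injective
weight `w`).  Scanning position `k` corresponds to row `k / N + 1` and column `⟨k % N⟩`,
so scanning positions in increasing order of `k` is exactly scanning the table in
increasing lexicographic order (row first, then vertex order within a row). -/
noncomputable def htList (N : ℕ) (G : SimpleGraph (Fin N)) (w : Sym2 (Fin N) → ℕ) :
    ℕ → List (Option (Sym2 (Fin N)))
  | 0 => []
  | k + 1 => htList N G w k ++ [htPick N G w k (htList N G w k)]

/-- The entry of the height table of `G` at scanning position `k`: the `w`-largest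
not-yet-entered edge containing the column vertex of position `k`, if any. -/
noncomputable def htEntry (N : ℕ) (G : SimpleGraph (Fin N)) (w : Sym2 (Fin N) → ℕ)
    (k : ℕ) : Option (Sym2 (Fin N)) :=
  htPick N G w k (htList N G w k)

/-- The scanning index at which the edge `e` is entered into the height table
(junk value `0` if `e` is never entered; every edge of `G` is in fact entered exactly
once).  The lexicographic order on table positions corresponds exactly to the order of
scanning indices. -/
noncomputable def htIndex (N : ℕ) (G : SimpleGraph (Fin N)) (w : Sym2 (Fin N) → ℕ)
    (e : Sym2 (Fin N)) : ℕ :=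
  if h : ∃ k, htEntry N G w k = some e then Nat.find h else 0

/-- The height (row, `1`-indexed) of the edge `e` in the height table of `G`. -/
noncomputable def height (N : ℕ) (G : SimpleGraph (Fin N)) (w : Sym2 (Fin N) → ℕ)
    (e : Sym2 (Fin N)) : ℕ :=
  htIndex N G w e / N + 1

/-- The index of the column (vertex) of the edge `e` in the height table of `G`. -/
noncomputable def col (N : ℕ) (G : SimpleGraph (Fin N)) (w : Sym2 (Fin N) → ℕ)
    (e : Sym2 (Fin N)) : ℕ :=
  htIndex N G w e % N

/-- The column vertex of the edge `e` in the height table of `G` (for `N > 0`). -/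
noncomputable def colV (N : ℕ) (hN : 0 < N) (G : SimpleGraph (Fin N))
    (w : Sym2 (Fin N) → ℕ) (e : Sym2 (Fin N)) : Fin N :=
  ⟨htIndex N G w e % N, Nat.mod_lt _ hN⟩

/-- A list of edges is increasing (with respect to the edge order given by `w`) if
consecutive entries are strictly increasing. -/
def Increasing {V : Type*} (w : Sym2 V → ℕ) (l : List (Sym2 V)) : Prop :=
  l.Chain' fun a b => w a < w b

end EO

/-!
For each row `r < h(xy)` the edge `xy` is still available at position `(r, y)`, so some edge
`yz` is entered there; conversely every edge entered in column `y` before `xy` was chosen while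
`xy` was a candidate, hence is heavier than `xy`. Edges of column `y` are determined by their
row, so `S_i(x, y)` corresponds to the rows `h(xy) - i, …, h(xy) - 1`.
-/
namespace EO

variable {N : ℕ} {G : SimpleGraph (Fin N)} {w : Sym2 (Fin N) → ℕ} {e f : Sym2 (Fin N)}
  {v : Fin N} {j k : ℕ}

lemma mem_htList_iff : some e ∈ htList N G w k ↔ ∃ j < k, htEntry N G w j = some e := by
  induction k with
  | zero => simp [htList]
  | succ k ih =>
    simp only [htList, List.mem_append, List.mem_singleton, ih, eq_comm (a := some e)]
    constructor
    · rintro (⟨j, hj, hje⟩ | he)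
      · exact ⟨j, by omega, hje⟩
      · exact ⟨k, by omega, he⟩
    · rintro ⟨j, hj, hje⟩
      rcases Nat.lt_succ_iff_lt_or_eq.mp hj with hj | rfl
      · exact Or.inl ⟨j, hj, hje⟩
      · exact Or.inr hje

lemma htEntry_spec (hv : k % N = v) (h : htEntry N G w k = some e) :
    e ∈ G.edgeSet ∧ v ∈ e ∧ some e ∉ htList N G w k ∧
      ∀ f ∈ G.edgeSet, v ∈ f → some f ∉ htList N G w k → w f ≤ w e := by
  rw [htEntry, htPick, dif_pos v.pos] at h
  split_ifs at h with hex
  have hspec := hex.choose_spec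
  rw [Option.some.inj h,
    show (⟨k % N, Nat.mod_lt k v.pos⟩ : Fin N) = v from Fin.ext hv] at hspec
  obtain ⟨⟨he, hve, hnew⟩, hmax⟩ := hspec
  exact ⟨he, hve, hnew, fun f hf hvf hnewf => hmax f ⟨hf, hvf, hnewf⟩⟩

lemma exists_htEntry_eq_some (he : e ∈ G.edgeSet) (hv : k % N = v) (hve : v ∈ e)
    (hnew : some e ∉ htList N G w k) : ∃ f, htEntry N G w k = some f := by
  obtain ⟨b, hb, hmax⟩ := Finset.exists_max_image
    {f | f ∈ G.edgeSet ∧ v ∈ f ∧ some f ∉ htList N G w k} w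
    ⟨e, by simp [he, hve, hnew]⟩
  rw [htEntry, htPick, dif_pos v.pos, show (⟨k % N, Nat.mod_lt k v.pos⟩ : Fin N) = v from
    Fin.ext hv, dif_pos ⟨b, by simpa using hb, fun f hf => hmax f (by simpa using hf)⟩]
  exact ⟨_, rfl⟩

lemma eq_of_htEntry_eq_some (hj : htEntry N G w j = some e) (hk : htEntry N G w k = some e) :
    j = k := by
  have entered_once : ∀ {a b}, a < b → htEntry N G w a = some e →
      htEntry N G w b = some e → False := fun {a b} hab ha hb => by
    have hN : 0 < N := (Quot.out e).1.pos
    exact (htEntry_spec (v := ⟨b % N, Nat.mod_lt b hN⟩) rfl hb).2.2.1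
      (mem_htList_iff.mpr ⟨a, hab, ha⟩)
  rcases lt_trichotomy j k with h | h | h
  · exact (entered_once h hj hk).elim
  · exact h
  · exact (entered_once h hk hj).elim

lemma htIndex_eq_of_htEntry_eq_some (h : htEntry N G w k = some e) : htIndex N G w e = k := by
  have hex : ∃ k, htEntry N G w k = some e := ⟨k, h⟩
  rw [htIndex, dif_pos hex]
  exact eq_of_htEntry_eq_some (Nat.find_spec hex) h

lemma some_notMem_htList (hk : k ≤ htIndex N G w e) : some e ∉ htList N G w k := by
  intro hmem
  obtain ⟨j, hj, hje⟩ := mem_htList_iff.mp hmem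
  rw [htIndex_eq_of_htEntry_eq_some hje] at hk
  omega

/-- Every edge is eventually entered: otherwise it would compete for the positions of one of
its endpoints in every row, and these positions would be filled by infinitely many distinct
edges. -/
lemma exists_htEntry_eq (he : e ∈ G.edgeSet) : ∃ k, htEntry N G w k = some e := by
  obtain ⟨v, hve⟩ : ∃ v, v ∈ e := ⟨(Quot.out e).1, Sym2.out_fst_mem e⟩
  by_contra! hnever
  have hrow : ∀ r : ℕ, ∃ f, htEntry N G w (r * N + v) = some f := fun r =>
    exists_htEntry_eq_some he (by simp [Nat.mod_eq_of_lt v.isLt]) hve fun hmem => by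
      obtain ⟨j, -, hj⟩ := mem_htList_iff.mp hmem
      exact hnever j hj
  choose g hg using hrow
  obtain ⟨a, b, hab, hgab⟩ := Finite.exists_ne_map_eq_of_infinite g
  have := eq_of_htEntry_eq_some (hg a) (hgab ▸ hg b)
  exact hab (Nat.eq_of_mul_eq_mul_right v.pos (by omega))

lemma htEntry_htIndex (he : e ∈ G.edgeSet) : htEntry N G w (htIndex N G w e) = some e := by
  obtain ⟨k, hk⟩ := exists_htEntry_eq he
  rwa [htIndex_eq_of_htEntry_eq_some hk]

lemma htIndex_eq_height_col : htIndex N G w e = N * (height N G w e - 1) + col N G w e := by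
  simp only [height, col, Nat.add_sub_cancel, Nat.div_add_mod]

lemma htIndex_lt_of_height_lt (h : height N G w f < height N G w e) :
    htIndex N G w f < htIndex N G w e :=
  Nat.lt_of_div_lt_div (Nat.succ_lt_succ_iff.mp h)

/-- `e` was still available, and contains the column vertex, when `f` was chosen. -/
lemma weight_le_of_htIndex_lt (he : e ∈ G.edgeSet) (hf : f ∈ G.edgeSet) (hve : v ∈ e)
    (hcol : col N G w f = v) (hlt : htIndex N G w f < htIndex N G w e) : w e ≤ w f :=
  (htEntry_spec hcol (htEntry_htIndex hf)).2.2.2 e he hve (some_notMem_htList hlt.le)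

lemma weight_lt_of_height_lt (hw : Function.Injective w) (he : e ∈ G.edgeSet)
    (hf : f ∈ G.edgeSet) (hve : v ∈ e) (hcol : col N G w f = v)
    (hlt : height N G w f < height N G w e) : w e < w f :=
  (weight_le_of_htIndex_lt he hf hve hcol (htIndex_lt_of_height_lt hlt)).lt_of_ne
    fun h => hlt.ne (by rw [hw h])

lemma height_injOn_col (v : Fin N) :
    {z | G.Adj v z ∧ col N G w s(v, z) = v}.InjOn fun z => height N G w s(v, z) := by
  intro z hz z' hz' hh
  have hidx : htIndex N G w s(v, z) = htIndex N G w s(v, z') := by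
    simp only at hh
    rw [htIndex_eq_height_col, htIndex_eq_height_col, hz.2, hz'.2, hh]
  have hentry := htEntry_htIndex (w := w) (G.mem_edgeSet.mpr hz.1)
  rw [hidx, htEntry_htIndex (G.mem_edgeSet.mpr hz'.1)] at hentry
  exact (Sym2.congr_right.mp (Option.some.inj hentry)).symm

/-- Position `(r, v)` precedes `e`, so `e` is still available there and the position is
filled. -/
lemma exists_adj_col_height_eq (he : e ∈ G.edgeSet) (hve : v ∈ e) {r : ℕ} (hr : 1 ≤ r)
    (hre : r < height N G w e) :
    ∃ z, G.Adj v z ∧ col N G w s(v, z) = v ∧ height N G w s(v, z) = r := by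
  obtain ⟨s, rfl⟩ : ∃ s, r = s + 1 := ⟨r - 1, by omega⟩
  set k := N * s + v with hk
  have hkv : k % N = v := by simp [hk, Nat.mod_eq_of_lt v.isLt]
  have hkr : k / N = s := by
    rw [hk, Nat.mul_add_div v.pos, Nat.div_eq_of_lt v.isLt, Nat.add_zero]
  have hke : k ≤ htIndex N G w e := by
    have hs : s + 1 ≤ htIndex N G w e / N := by simp only [height] at hre; omega
    have := (Nat.le_div_iff_mul_le v.pos).mp hs
    rw [Nat.add_mul, Nat.one_mul, Nat.mul_comm] at this
    omega
  obtain ⟨f, hf⟩ := exists_htEntry_eq_some he hkv hve (some_notMem_htList hke)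
  obtain ⟨hfG, hvf, -⟩ := htEntry_spec hkv hf
  obtain ⟨z, rfl⟩ := Sym2.mem_iff_exists.mp hvf
  have hidx := htIndex_eq_of_htEntry_eq_some hf
  exact ⟨z, hfG, by rw [col, hidx, hkv], by rw [height, hidx, hkr]⟩

lemma ncard_adj_col_height_mem_Ico (he : e ∈ G.edgeSet) (hve : v ∈ e) {a : ℕ} (ha : 1 ≤ a) :
    {z | G.Adj v z ∧ col N G w s(v, z) = v ∧ a ≤ height N G w s(v, z) ∧
      height N G w s(v, z) < height N G w e}.ncard = height N G w e - a := by
  have himage : (fun z => height N G w s(v, z)) ''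
      {z | G.Adj v z ∧ col N G w s(v, z) = v ∧ a ≤ height N G w s(v, z) ∧
        height N G w s(v, z) < height N G w e} = Set.Ico a (height N G w e) := by
    ext r
    constructor
    · rintro ⟨z, ⟨-, -, hza, hze⟩, rfl⟩
      exact ⟨hza, hze⟩
    · rintro ⟨hra, hre⟩
      obtain ⟨z, hvz, hcol, rfl⟩ := exists_adj_col_height_eq he hve (ha.trans hra) hre
      exact ⟨z, ⟨hvz, hcol, hra, hre⟩, rfl⟩
  have hinj : Set.InjOn (fun z => height N G w s(v, z))
      {z | G.Adj v z ∧ col N G w s(v, z) = v ∧ a ≤ height N G w s(v, z) ∧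
        height N G w s(v, z) < height N G w e} :=
    (height_injOn_col v).mono <| Set.ofPred_subset_ofPred.mpr fun _ hz => ⟨hz.1, hz.2.1⟩
  rw [← hinj.ncard_image, himage,
    Set.ncard_eq_toFinset_card', Set.toFinset_Ico, Nat.card_Ico]

end EO

theorem stmt17_general (N : ℕ) (G : SimpleGraph (Fin N)) (wt : Sym2 (Fin N) → ℕ)
    (hw : Function.Injective wt) (x y : Fin N) (hxy : G.Adj x y)
    (hcol : EO.col N G wt s(x, y) = (x : ℕ))
    (i : ℕ) (hih : i < EO.height N G wt s(x, y)) :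
    (({z : Fin N | G.Adj y z ∧ EO.col N G wt s(y, z) = (y : ℕ) ∧
        EO.height N G wt s(x, y) - i ≤ EO.height N G wt s(y, z) ∧
        EO.height N G wt s(y, z) < EO.height N G wt s(x, y)} : Set (Fin N)).ncard = i) ∧
    x ∉ {z : Fin N | G.Adj y z ∧ EO.col N G wt s(y, z) = (y : ℕ) ∧
        EO.height N G wt s(x, y) - i ≤ EO.height N G wt s(y, z) ∧
        EO.height N G wt s(y, z) < EO.height N G wt s(x, y)} ∧
    y ∉ {z : Fin N | G.Adj y z ∧ EO.col N G wt s(y, z) = (y : ℕ) ∧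
        EO.height N G wt s(x, y) - i ≤ EO.height N G wt s(y, z) ∧
        EO.height N G wt s(y, z) < EO.height N G wt s(x, y)} ∧
    ∀ z : Fin N, (G.Adj y z ∧ EO.col N G wt s(y, z) = (y : ℕ) ∧
        EO.height N G wt s(x, y) - i ≤ EO.height N G wt s(y, z) ∧
        EO.height N G wt s(y, z) < EO.height N G wt s(x, y)) →
      wt s(x, y) < wt s(y, z) := by
  refine ⟨?_, ?_, fun ⟨hyy, _⟩ => G.irrefl hyy, fun z hz => ?_⟩
  · rw [EO.ncard_adj_col_height_mem_Ico (G.mem_edgeSet.mpr hxy) (Sym2.mem_mk_right x y)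
      (by omega)]
    omega
  · rintro ⟨-, hcolx, -⟩
    rw [Sym2.eq_swap, hcol] at hcolx
    exact hxy.ne (Fin.ext hcolx)
  · exact EO.weight_lt_of_height_lt hw (G.mem_edgeSet.mpr hxy) (G.mem_edgeSet.mpr hz.1)
      (Sym2.mem_mk_right x y) hz.2.1 hz.2.2.2

/-- Definition 3.10 and the subsequent observations.  Let `G` be an
ordered graph, `xy ∈ E(G)` with column vertex `v(xy, G) = x`, and let `i` be a positive
integer with `i < h(xy, G)`.  Let `S_i(x, y)` be the set of vertices `z` with
`v(yz, G) = y` and `h(xy, G) − i ≤ h(yz, G) < h(xy, G)`.  Then `|S_i(x, y)| = i`, the set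
`S_i(x, y)` contains neither `x` nor `y`, and for every `z ∈ S_i(x, y)` the path `xyz` is
increasing, i.e. `xy < yz` in the edge order. -/
theorem stmt17 (N : ℕ) (G : SimpleGraph (Fin N)) (wt : Sym2 (Fin N) → ℕ)
    (hw : Function.Injective wt) (x y : Fin N) (hxy : G.Adj x y)
    (hcol : EO.col N G wt s(x, y) = (x : ℕ))
    (i : ℕ) (hi : 1 ≤ i) (hih : i < EO.height N G wt s(x, y)) :
    (({z : Fin N | G.Adj y z ∧ EO.col N G wt s(y, z) = (y : ℕ) ∧
        EO.height N G wt s(x, y) - i ≤ EO.height N G wt s(y, z) ∧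
        EO.height N G wt s(y, z) < EO.height N G wt s(x, y)} : Set (Fin N)).ncard = i) ∧
    x ∉ {z : Fin N | G.Adj y z ∧ EO.col N G wt s(y, z) = (y : ℕ) ∧
        EO.height N G wt s(x, y) - i ≤ EO.height N G wt s(y, z) ∧
        EO.height N G wt s(y, z) < EO.height N G wt s(x, y)} ∧
    y ∉ {z : Fin N | G.Adj y z ∧ EO.col N G wt s(y, z) = (y : ℕ) ∧
        EO.height N G wt s(x, y) - i ≤ EO.height N G wt s(y, z) ∧
        EO.height N G wt s(y, z) < EO.height N G wt s(x, y)} ∧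
    ∀ z : Fin N, (G.Adj y z ∧ EO.col N G wt s(y, z) = (y : ℕ) ∧
        EO.height N G wt s(x, y) - i ≤ EO.height N G wt s(y, z) ∧
        EO.height N G wt s(y, z) < EO.height N G wt s(x, y)) →
      wt s(x, y) < wt s(y, z) :=
  stmt17_general N G wt hw x y hxy hcol i hih
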